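/- arXiv:1803.10623 — 5 statements merged into one kernel-verified Lean document; each statement's English description precedes it below -/
import Mathlib

section
/- Let N ≥ 1 and M ≥ 1 be integers. If each of N edge pairs independently and uniformly at random selects a mini-slot from {1,...,M}, then the probability that exactly one pair selects the minimum selected slot (a successful contention) equals Σ_{k=1}^{M} (N/M) · ((M-k)/M)^{N-1}. -/
/-!
A choice `f : Fin N → Fin M` with a unique minimum is determined by the position `i` of the
minimum, its value `v`, and the values of the other `N - 1` pairs, each of which may be any of
the `M - 1 - v` slots above `v`. Hence there are `N ∑ᵥ (M - 1 - v) ^ (N - 1)` such choices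
out of `M ^ N`, and substituting `k = v + 1` gives the stated sum.
-/

open Finset

section StrictArgmin

variable {ι α : Type*}

def IsStrictArgmin [Preorder α] (f : ι → α) (i : ι) : Prop :=
  ∀ j, j ≠ i → f i < f j

theorem IsStrictArgmin.eq [Preorder α] {f : ι → α} {i i' : ι}
    (hi : IsStrictArgmin f i) (hi' : IsStrictArgmin f i') : i = i' := by
  by_contra hne
  exact lt_asymm (hi i' (Ne.symm hne)) (hi' i hne)

noncomputable def existsUniqueIsStrictArgminEquiv [Preorder α] :
    {f : ι → α // ∃! i, IsStrictArgmin f i} ≃ Σ i, {f : ι → α // IsStrictArgmin f i}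
    where
  toFun f := ⟨f.2.exists.choose, f.1, f.2.exists.choose_spec⟩
  invFun p := ⟨p.2.1, p.1, p.2.2, fun _ hi' => hi'.eq p.2.2⟩
  right_inv := by
    rintro ⟨i, f, hi⟩
    exact Sigma.subtype_ext (IsStrictArgmin.eq (Exists.choose_spec _) hi) rfl

def isStrictArgminEquiv [DecidableEq ι] [Preorder α] (i : ι) :
    {f : ι → α // IsStrictArgmin f i} ≃ Σ v : α, ({j // j ≠ i} → {w // v < w}) :=
  ((Equiv.funSplitAt i α).subtypeEquiv (q := fun p => ∀ j, p.1 < p.2 j)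
      fun _ => ⟨fun h j => h j j.2, fun h j hj => h ⟨j, hj⟩⟩).trans <|
    (Equiv.subtypeProdEquivSigmaSubtype
        fun (v : α) (g : {j // j ≠ i} → α) => ∀ j, v < g j).trans <|
      Equiv.sigmaCongrRight fun _ => Equiv.subtypePiEquivPi

theorem card_isStrictArgmin [Fintype ι] [DecidableEq ι] [Fintype α] [Preorder α] (i : ι) :
    Nat.card {f : ι → α // IsStrictArgmin f i}
      = ∑ v : α, Nat.card {w // v < w} ^ (Fintype.card ι - 1) := by
  rw [Nat.card_congr (isStrictArgminEquiv i), Nat.card_sigma]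
  simp only [Nat.card_fun, Nat.card_eq_fintype_card (α := {j // j ≠ i}),
    Fintype.card_subtype_compl, Fintype.card_unique]

theorem card_existsUnique_isStrictArgmin [Fintype ι] [Fintype α] [Preorder α] :
    Nat.card {f : ι → α // ∃! i, IsStrictArgmin f i}
      = Fintype.card ι * ∑ v : α, Nat.card {w // v < w} ^ (Fintype.card ι - 1) := by
  classical
  rw [Nat.card_congr existsUniqueIsStrictArgminEquiv, Nat.card_sigma]
  simp only [card_isStrictArgmin, sum_const, card_univ, smul_eq_mul]

end StrictArgmin

theorem Fin.card_subtype_lt {M : ℕ} (v : Fin M) : Nat.card {w // v < w} = M - 1 - v := by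
  rw [Nat.card_eq_fintype_card, Fintype.card_subtype, filter_lt_eq_Ioi, Fin.card_Ioi]

theorem card_existsUnique_isStrictArgmin_fin (N M : ℕ) :
    Nat.card {f : Fin N → Fin M // ∃! i, IsStrictArgmin f i}
      = N * ∑ k ∈ Icc 1 M, (M - k) ^ (N - 1) := by
  rw [card_existsUnique_isStrictArgmin, Fintype.card_fin]
  simp only [Fin.card_subtype_lt]
  rw [Fin.sum_univ_eq_sum_range (fun v => (M - 1 - v) ^ (N - 1)), range_eq_Ico,
    ← Ico_add_one_right_eq_Icc, ← zero_add 1, ← sum_Ico_add' (fun k => (M - k) ^ (N - 1))]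
  simp only [Nat.sub_sub, add_comm 1]

theorem cads_success_probability_general (N M : ℕ) :
    (Nat.card {f : Fin N → Fin M // ∃! i : Fin N, ∀ j : Fin N, j ≠ i → f i < f j} : ℝ)
      / (M : ℝ) ^ N
    = ∑ k ∈ Finset.Icc 1 M, ((N : ℝ) / M) * (((M : ℝ) - k) / M) ^ (N - 1) := by
  have hterm (x : ℝ) : (N : ℝ) * x ^ (N - 1) / (M : ℝ) ^ N = N / M * (x / M) ^ (N - 1) := by
    rcases N with _ | n
    · simp
    · simp only [add_tsub_cancel_right]
      ring
  change (Nat.card {f : Fin N → Fin M // ∃! i, IsStrictArgmin f i} : ℝ) / _ = _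
  rw [card_existsUnique_isStrictArgmin_fin, Nat.cast_mul, Nat.cast_sum, mul_sum, sum_div]
  refine sum_congr rfl fun k hk => ?_
  rw [← hterm, Nat.cast_pow, Nat.cast_sub (mem_Icc.mp hk).2]

/-- Theorem 4 (success probability of CADS with uniform mapping): if each of `N ≥ 1`
edge pairs independently and uniformly selects a mini-slot in `{1,...,M}` (`M ≥ 1`),
the probability that exactly one pair selects the minimum selected slot equals
`∑_{k=1}^M (N/M) ((M-k)/M)^{N-1}`. -/
theorem cads_success_probability (N M : ℕ) (hN : 1 ≤ N) (hM : 1 ≤ M) :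
    (Nat.card {f : Fin N → Fin M // ∃! i : Fin N, ∀ j : Fin N, j ≠ i → f i < f j} : ℝ)
      / (M : ℝ) ^ N
    = ∑ k ∈ Finset.Icc 1 M, ((N : ℝ) / M) * (((M : ℝ) - k) / M) ^ (N - 1) :=
  cads_success_probability_general N M
end

section
/- For integers N ≥ 2 and M ≥ N, the success probability p(N,M) = Σ_{k=1}^{M} (N/M)·((M-k)/M)^{N-1} satisfies p(N,M) ≥ (1 - (N/M)^N) / (1 + 1/(N-1))^{N-1}. -/
open Finset

private lemma step_bounds (b : ℝ) (hb : 0 ≤ b) (n : ℕ) (hn : 1 ≤ n) :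
    (n : ℝ) * b ^ (n - 1) ≤ (b + 1) ^ n - b ^ n ∧
      (b + 1) ^ n - b ^ n ≤ (n : ℝ) * (b + 1) ^ (n - 1) := by
  have key := geom_sum₂_mul (b + 1) b n
  simp only [add_sub_cancel_left, mul_one] at key
  rw [← key]
  have hsplit : ∀ i ∈ Finset.range n, b ^ (n-1) = b ^ i * b ^ (n-1-i) ∧
      (b+1) ^ (n-1) = (b+1) ^ i * (b+1) ^ (n-1-i) := by
    intro i hi
    rw [Finset.mem_range] at hi
    constructor <;> (rw [← pow_add]; congr 1; omega)
  constructor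
  · calc (n:ℝ) * b ^ (n-1) = ∑ _i ∈ Finset.range n, b ^ (n-1) := by
          rw [Finset.sum_const, card_range, nsmul_eq_mul]
    _ ≤ ∑ i ∈ Finset.range n, (b+1) ^ i * b ^ (n-1-i) := by
        apply Finset.sum_le_sum
        intro i hi
        rw [(hsplit i hi).1]
        exact mul_le_mul_of_nonneg_right (pow_le_pow_left₀ hb (by linarith) i) (pow_nonneg hb _)
  · calc ∑ i ∈ Finset.range n, (b+1) ^ i * b ^ (n-1-i)
        ≤ ∑ _i ∈ Finset.range n, (b+1) ^ (n-1) := by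
          apply Finset.sum_le_sum
          intro i hi
          rw [(hsplit i hi).2]
          exact mul_le_mul_of_nonneg_left (pow_le_pow_left₀ hb (by linarith) _)
            (pow_nonneg (by linarith) i)
    _ = (n:ℝ) * (b+1) ^ (n-1) := by rw [Finset.sum_const, card_range, nsmul_eq_mul]

private lemma sum_shift (g : ℕ → ℝ) (M : ℕ) :
    ∑ i ∈ Finset.range M, g (i+1) = ∑ j ∈ Finset.Ioc 0 M, g j := by
  rw [← Finset.Icc_add_one_left_eq_Ioc, ← Finset.Ico_add_one_right_eq_Icc, Finset.sum_Ico_eq_sum_range]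
  simp [add_comm]

private lemma lem1 (N M : ℕ) (hN : 1 ≤ N) :
    (M:ℝ) ^ N ≤ ∑ j ∈ Finset.Ioc 0 M, (N:ℝ) * (j:ℝ) ^ (N-1) := by
  have tel := Finset.sum_range_sub (fun i => ((i:ℕ):ℝ) ^ N) M
  simp only [Nat.cast_zero, Nat.cast_add, Nat.cast_one] at tel
  have h0 : (0:ℝ) ^ N = 0 := zero_pow (by omega)
  rw [h0, sub_zero] at tel
  rw [← tel, ← sum_shift (fun j => (N:ℝ) * (j:ℝ) ^ (N-1)) M]
  apply Finset.sum_le_sum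
  intro i _
  have := (step_bounds (i:ℝ) (by positivity) N hN).2
  push_cast
  linarith

private lemma lem2 (N M : ℕ) (hN : 1 ≤ N) :
    ∑ j ∈ Finset.Ioc 0 (N-1), (N:ℝ) * (j:ℝ) ^ (N-1) ≤ (N:ℝ) ^ N := by
  have tel := Finset.sum_range_sub (fun i => ((i:ℕ):ℝ) ^ N) N
  simp only [Nat.cast_zero, Nat.cast_add, Nat.cast_one] at tel
  have h0 : (0:ℝ) ^ N = 0 := zero_pow (by omega)
  rw [h0, sub_zero] at tel
  calc ∑ j ∈ Finset.Ioc 0 (N-1), (N:ℝ) * (j:ℝ) ^ (N-1)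
      ≤ ∑ j ∈ Finset.Ioc 0 (N-1), (((j:ℝ)+1) ^ N - (j:ℝ) ^ N) := by
        apply Finset.sum_le_sum
        intro i _
        exact (step_bounds (i:ℝ) (by positivity) N hN).1
    _ ≤ ∑ j ∈ Finset.range N, (((j:ℝ)+1) ^ N - (j:ℝ) ^ N) := by
        apply Finset.sum_le_sum_of_subset_of_nonneg
        · intro a ha
          simp only [Finset.mem_Ioc] at ha
          simp only [Finset.mem_range]
          omega
        · intro i _ _
          have h1 : (i:ℝ) ≤ (i:ℝ) + 1 := by linarith
          have := pow_le_pow_left₀ (by positivity) h1 N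
          linarith
    _ = (N:ℝ) ^ N := tel

/-- For integers `N ≥ 2` and `M ≥ N`, the success probability
`p(N,M) = ∑_{k=1}^M (N/M)((M-k)/M)^{N-1}` is at least
`(1 - (N/M)^N) / (1 + 1/(N-1))^{N-1}`. -/
theorem success_probability_lower_bound (N M : ℕ) (hN : 2 ≤ N) (hM : N ≤ M) :
    (1 - ((N : ℝ) / M) ^ N) / (1 + 1 / ((N : ℝ) - 1)) ^ (N - 1)
      ≤ ∑ k ∈ Finset.Icc 1 M, ((N : ℝ) / M) * (((M : ℝ) - k) / M) ^ (N - 1) := by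
  have hM1 : 1 ≤ M := by omega
  have hMpos : (0:ℝ) < M := by exact_mod_cast Nat.lt_of_lt_of_le (by omega) hM
  have hN2 : (2:ℝ) ≤ N := by exact_mod_cast hN
  have hN1 : (1:ℝ) ≤ (N:ℝ) - 1 := by linarith
  set C : ℝ := (1 + 1/((N:ℝ)-1)) ^ (N-1) with hCdef
  have hbase : (1:ℝ) ≤ 1 + 1/((N:ℝ)-1) := by
    have : (0:ℝ) < 1/((N:ℝ)-1) := by positivity
    linarith
  have hC1 : (1:ℝ) ≤ C := one_le_pow₀ hbase
  have hCpos : (0:ℝ) < C := lt_of_lt_of_le one_pos hC1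
  -- reindex the goal sum
  have hS : ∑ k ∈ Finset.Icc 1 M, ((N : ℝ) / M) * (((M : ℝ) - k) / M) ^ (N - 1)
      = ∑ j ∈ Finset.range M, ((N:ℝ)/M) * ((j:ℝ)/M) ^ (N-1) := by
    apply Finset.sum_nbij' (fun k => M - k) (fun j => M - j)
    · intro a ha; simp only [Finset.mem_Icc] at ha; simp only [Finset.mem_range]; omega
    · intro a ha; simp only [Finset.mem_range] at ha; simp only [Finset.mem_Icc]; omega
    · intro a ha; simp only [Finset.mem_Icc] at ha; omega
    · intro a ha; simp only [Finset.mem_range] at ha; omega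
    · intro a ha
      simp only [Finset.mem_Icc] at ha
      rw [Nat.cast_sub ha.2]
  rw [hS, div_le_iff₀ hCpos]
  set S : ℝ := ∑ j ∈ Finset.range M, ((N:ℝ)/M) * ((j:ℝ)/M) ^ (N-1) with hSdef
  -- the key comparison
  have key : ∑ j ∈ Finset.Icc (N-1) (M-1), ((N:ℝ)/M) * (((j:ℝ)+1)/M) ^ (N-1) ≤ S * C := by
    rw [mul_comm, hSdef, Finset.mul_sum]
    calc ∑ j ∈ Finset.Icc (N-1) (M-1), ((N:ℝ)/M) * (((j:ℝ)+1)/M) ^ (N-1)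
        ≤ ∑ j ∈ Finset.Icc (N-1) (M-1), C * (((N:ℝ)/M) * ((j:ℝ)/M) ^ (N-1)) := by
          apply Finset.sum_le_sum
          intro j hj
          simp only [Finset.mem_Icc] at hj
          have hjN : ((N:ℝ) - 1) ≤ (j:ℝ) := by
            have h' : N ≤ j + 1 := by omega
            have h'' : (N:ℝ) ≤ (j:ℝ) + 1 := by exact_mod_cast h'
            linarith
          have hjpos : (0:ℝ) < j := by linarith
          have h3 : (j:ℝ) + 1 ≤ (1 + 1/((N:ℝ)-1)) * j := by
            have h2 : (1:ℝ) ≤ (j:ℝ)/((N:ℝ)-1) := by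
              rw [le_div_iff₀ (by linarith)]; linarith
            have h4 : (1 + 1/((N:ℝ)-1)) * (j:ℝ) = (j:ℝ) + (j:ℝ)/((N:ℝ)-1) := by ring
            rw [h4]; linarith
          have hstep : ((j:ℝ)+1)/M ≤ (1 + 1/((N:ℝ)-1)) * ((j:ℝ)/M) := by
            rw [mul_div_assoc']
            gcongr
          calc ((N:ℝ)/M) * (((j:ℝ)+1)/M) ^ (N-1)
              ≤ ((N:ℝ)/M) * ((1 + 1/((N:ℝ)-1)) * ((j:ℝ)/M)) ^ (N-1) :=
                mul_le_mul_of_nonneg_left (pow_le_pow_left₀ (by positivity) hstep _)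
                  (by positivity)
            _ = C * (((N:ℝ)/M) * ((j:ℝ)/M) ^ (N-1)) := by
                rw [mul_pow, hCdef]; ring
      _ ≤ ∑ j ∈ Finset.range M, C * (((N:ℝ)/M) * ((j:ℝ)/M) ^ (N-1)) := by
          apply Finset.sum_le_sum_of_subset_of_nonneg
          · intro a ha
            simp only [Finset.mem_Icc] at ha
            simp only [Finset.mem_range]
            omega
          · intro i _ _
            positivity
  -- reindex key's LHS to Ioc (N-1) M
  have hre : ∑ j ∈ Finset.Icc (N-1) (M-1), ((N:ℝ)/M) * (((j:ℝ)+1)/M) ^ (N-1)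
      = ∑ j ∈ Finset.Ioc (N-1) M, ((N:ℝ)/M) * ((j:ℝ)/M) ^ (N-1) := by
    apply Finset.sum_nbij' (fun j => j + 1) (fun j => j - 1)
    · intro a ha; simp only [Finset.mem_Icc] at ha; simp only [Finset.mem_Ioc]; omega
    · intro a ha; simp only [Finset.mem_Ioc] at ha; simp only [Finset.mem_Icc]; omega
    · intro a _; omega
    · intro a ha; simp only [Finset.mem_Ioc] at ha; omega
    · intro a _; norm_cast
  -- splitting
  have hsplit := Finset.sum_Ioc_consecutive (fun j => ((N:ℝ)/M) * ((j:ℝ)/M) ^ (N-1))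
    (Nat.zero_le (N-1)) (by omega : N - 1 ≤ M)
  -- convert to the scaled sums
  have hMN : (M:ℝ) ^ N = (M:ℝ) ^ (N-1) * M := by
    rw [← pow_succ]; congr 1; omega
  have he : ∀ j : ℕ, ((N:ℝ)/M) * ((j:ℝ)/M) ^ (N-1) = ((N:ℝ) * (j:ℝ) ^ (N-1)) / (M:ℝ) ^ N := by
    intro j
    rw [div_pow, div_mul_div_comm, hMN, mul_comm ((M:ℝ)^(N-1)) (M:ℝ)]
  have hbig : (1:ℝ) ≤ ∑ j ∈ Finset.Ioc 0 M, ((N:ℝ)/M) * ((j:ℝ)/M) ^ (N-1) := by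
    have := lem1 N M (by omega)
    calc (1:ℝ) = (M:ℝ)^N / (M:ℝ)^N := by rw [div_self (by positivity)]
      _ ≤ (∑ j ∈ Finset.Ioc 0 M, (N:ℝ) * (j:ℝ) ^ (N-1)) / (M:ℝ)^N := by gcongr
      _ = ∑ j ∈ Finset.Ioc 0 M, ((N:ℝ)/M) * ((j:ℝ)/M) ^ (N-1) := by
          rw [Finset.sum_div]
          exact Finset.sum_congr rfl (fun j _ => (he j).symm)
  have hsmall : ∑ j ∈ Finset.Ioc 0 (N-1), ((N:ℝ)/M) * ((j:ℝ)/M) ^ (N-1) ≤ ((N:ℝ)/M) ^ N := by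
    have := lem2 N M (by omega)
    calc ∑ j ∈ Finset.Ioc 0 (N-1), ((N:ℝ)/M) * ((j:ℝ)/M) ^ (N-1)
        = (∑ j ∈ Finset.Ioc 0 (N-1), (N:ℝ) * (j:ℝ) ^ (N-1)) / (M:ℝ)^N := by
          rw [Finset.sum_div]
          exact Finset.sum_congr rfl (fun j _ => he j)
      _ ≤ (N:ℝ)^N / (M:ℝ)^N := by gcongr
      _ = ((N:ℝ)/M) ^ N := (div_pow _ _ _).symm
  rw [hre] at key
  linarith
end

section
/- Let W_1, ..., W_N be iid real random variables and let W_* = max_i W_i. Let each index i independently pick a uniform slot m_i ∈ {1,...,M} as a measurable nondecreasing function of W_i (so that larger W_i gives smaller slot index, with P(m_i = m) = 1/M for each m). Let S be the event that the minimum chosen slot is unique, and let the scheduled weight be W_* on S and 0 otherwise. Then E[W_* · 1_S] = N · Σ_{m=1}^{M} ((M-m)/M)^{N-1} · E[W · 1{a_m ≤ W < a_{m-1}}], where a_M < a_{M-1} < ... < a_0 are the thresholds defining the slot assignment (slot m corresponds to a_m ≤ W < a_{m-1}) and W is a generic copy of W_1. -/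
/-! The success event splits, up to a null set, into the disjoint events "index `i` alone takes
the minimal slot, and that slot is `m`". Slots are antitone in the weight, so on such an event the
maximal weight is `ω i`. Each event is a box in the product space, so its contribution factorises
as `∫_{slot = m} x dν` times `P(slot > m) ^ (N - 1) = ((M - m) / M) ^ (N - 1)`; the `N` choices of
`i` contribute equally. -/

open MeasureTheory Finset

section BoxIntegral

theorem Set.indicator_univ_pi_prod {ι X R : Type*} [Fintype ι] [CommMonoidWithZero R]
    (t : ι → Set X) (g : ι → X → R) :
    (Set.univ.pi t).indicator (fun ω => ∏ j, g j (ω j)) =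
      fun ω => ∏ j, (t j).indicator (g j) (ω j) := by
  ext ω
  by_cases hω : ω ∈ Set.univ.pi t
  · rw [Set.indicator_of_mem hω]
    exact prod_congr rfl fun j _ => (Set.indicator_of_mem (hω j (Set.mem_univ j)) _).symm
  · obtain ⟨j, -, hj⟩ : ∃ j ∈ Set.univ, ω j ∉ t j := by simpa [Set.mem_pi] using hω
    rw [Set.indicator_of_notMem hω,
      Finset.prod_eq_zero (Finset.mem_univ j) (Set.indicator_of_notMem hj _)]

variable {ι X : Type*} [Fintype ι] [MeasurableSpace X] {μ : ι → Measure X}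
  [∀ j, SigmaFinite (μ j)] {t : ι → Set X}

theorem setIntegral_univ_pi_prod (ht : ∀ j, MeasurableSet (t j)) (g : ι → X → ℝ) :
    ∫ ω in Set.univ.pi t, ∏ j, g j (ω j) ∂Measure.pi μ = ∏ j, ∫ x in t j, g j x ∂μ j := by
  rw [← integral_indicator (MeasurableSet.univ_pi ht), Set.indicator_univ_pi_prod,
    integral_fintype_prod_eq_prod]
  exact prod_congr rfl fun j _ => integral_indicator (ht j)

theorem integrableOn_univ_pi_prod (ht : ∀ j, MeasurableSet (t j)) {g : ι → X → ℝ}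
    (hg : ∀ j, IntegrableOn (g j) (t j) (μ j)) :
    IntegrableOn (fun ω => ∏ j, g j (ω j)) (Set.univ.pi t) (Measure.pi μ) := by
  rw [← integrable_indicator_iff (MeasurableSet.univ_pi ht), Set.indicator_univ_pi_prod]
  exact Integrable.fintype_prod fun j => (integrable_indicator_iff (ht j)).2 (hg j)

end BoxIntegral

section UpdateBox

theorem prod_update_one_apply {ι X R : Type*} [Fintype ι] [DecidableEq ι] [CommMonoid R]
    (i : ι) (f : X → R) (ω : ι → X) :
    ∏ j, Function.update (fun _ => (1 : X → R)) i f j (ω j) = f (ω i) := by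
  simp [Function.update_apply, ite_apply]

variable {ι X : Type*} [DecidableEq ι] [MeasurableSpace X] {A B : Set X}

theorem measurableSet_update_apply (hA : MeasurableSet A) (hB : MeasurableSet B) (i j : ι) :
    MeasurableSet (Function.update (fun _ => B) i A j) := by
  rcases eq_or_ne j i with rfl | hji
  · simpa using hA
  · simpa [hji] using hB

variable [Fintype ι] {ν : Measure X}

theorem setIntegral_univ_pi_update_eval [SigmaFinite ν] (hA : MeasurableSet A)
    (hB : MeasurableSet B) (i : ι) (f : X → ℝ) :
    ∫ ω in Set.univ.pi (Function.update (fun _ => B) i A), f (ω i) ∂Measure.pi (fun _ => ν) =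
      (∫ x in A, f x ∂ν) * ν.real B ^ (Fintype.card ι - 1) := by
  simp_rw [← prod_update_one_apply i f]
  rw [setIntegral_univ_pi_prod (measurableSet_update_apply hA hB i),
    Fintype.prod_eq_mul_prod_compl i]
  have hne : ∀ j ∈ ({i}ᶜ : Finset ι), j ≠ i := fun j hj => by simpa using hj
  rw [prod_congr rfl fun j hj => by
      rw [Function.update_of_ne (hne j hj), Function.update_of_ne (hne j hj)],
    prod_const, card_compl, card_singleton]
  simp

theorem integrableOn_univ_pi_update_eval [IsFiniteMeasure ν] (hA : MeasurableSet A)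
    (hB : MeasurableSet B) (i : ι) {f : X → ℝ} (hf : IntegrableOn f A ν) :
    IntegrableOn (fun ω => f (ω i)) (Set.univ.pi (Function.update (fun _ => B) i A))
      (Measure.pi fun _ => ν) := by
  simp_rw [← prod_update_one_apply i f]
  refine integrableOn_univ_pi_prod (measurableSet_update_apply hA hB i) fun j => ?_
  rcases eq_or_ne j i with rfl | hji
  · simpa using hf
  · rw [Function.update_of_ne hji, Function.update_of_ne hji]
    exact (integrable_const 1).integrableOn

end UpdateBox

section UniformSlots

variable {X : Type*} [MeasurableSpace X] {ν : Measure X} {s : X → ℕ} {M : ℕ}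

theorem measure_preimage_finset_of_uniform (hs : Measurable s)
    (hunif : ∀ m ∈ Icc 1 M, ν (s ⁻¹' {m}) = 1 / M) {K : Finset ℕ} (hK : K ⊆ Icc 1 M) :
    ν (s ⁻¹' K) = #K / M := by
  rw [← sum_measure_preimage_singleton K fun m _ => hs (measurableSet_singleton m),
    sum_congr rfl fun m hm => hunif m (hK hm), sum_const, nsmul_eq_mul, mul_one_div]

variable [IsProbabilityMeasure ν]

theorem ae_mem_Icc_of_uniform (hM : 1 ≤ M) (hs : Measurable s)
    (hunif : ∀ m ∈ Icc 1 M, ν (s ⁻¹' {m}) = 1 / M) : ∀ᵐ x ∂ν, s x ∈ Icc 1 M := by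
  have hmeas : MeasurableSet {x | s x ∈ Icc 1 M} := hs (Set.toFinite _).measurableSet
  rw [ae_iff_measure_eq hmeas.nullMeasurableSet, measure_univ]
  have hM0 : (M : ENNReal) ≠ 0 := by exact_mod_cast (by omega : M ≠ 0)
  have hK := measure_preimage_finset_of_uniform hs hunif (subset_refl (Icc 1 M))
  rwa [Nat.card_Icc, Nat.add_sub_cancel, ENNReal.div_self hM0 (ENNReal.natCast_ne_top M)] at hK

theorem measureReal_preimage_Ioi_of_uniform (hM : 1 ≤ M) (hs : Measurable s)
    (hunif : ∀ m ∈ Icc 1 M, ν (s ⁻¹' {m}) = 1 / M) {m : ℕ} (hm : m ≤ M) :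
    ν.real (s ⁻¹' Set.Ioi m) = ((M : ℝ) - m) / M := by
  have hae : s ⁻¹' Set.Ioi m =ᵐ[ν] s ⁻¹' (Icc (m + 1) M : Set ℕ) := by
    filter_upwards [ae_mem_Icc_of_uniform hM hs hunif] with x hx
    simp only [mem_Icc] at hx
    change (m < s x) = (s x ∈ Icc (m + 1) M)
    simp only [mem_Icc, eq_iff_iff]
    omega
  rw [measureReal_def, measure_congr hae, measure_preimage_finset_of_uniform hs hunif
    (Icc_subset_Icc (by omega) le_rfl), Nat.card_Icc, ENNReal.toReal_div,
    ENNReal.toReal_natCast, ENNReal.toReal_natCast, Nat.add_sub_add_right, Nat.cast_sub hm]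

end UniformSlots

section Thresholds

variable {M : ℕ} {a : ℕ → ℝ} {slot : ℝ → ℕ}

theorem threshold_antitoneOn (ha : ∀ m ∈ Icc 1 M, a m < a (m - 1)) :
    AntitoneOn a (Set.Iic M) :=
  antitoneOn_of_succ_le Set.ordConnected_Iic fun m _ _ hm =>
    (ha (m + 1) (mem_Icc.2 ⟨by omega, hm⟩)).le

theorem lt_of_slot_lt (ha : ∀ m ∈ Icc 1 M, a m < a (m - 1))
    (hslot : ∀ m ∈ Icc 1 M, ∀ x : ℝ, slot x = m ↔ x ∈ Set.Ico (a m) (a (m - 1)))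
    {x y : ℝ} (hx : slot x ∈ Icc 1 M) (hy : slot y ∈ Icc 1 M) (hxy : slot x < slot y) :
    y < x := by
  have hxI := (hslot _ hx x).1 rfl
  have hyI := (hslot _ hy y).1 rfl
  rw [mem_Icc] at hx hy
  calc y < a (slot y - 1) := hyI.2
    _ ≤ a (slot x) := threshold_antitoneOn ha (Set.mem_Iic.2 hx.2)
        (Set.mem_Iic.2 (by omega)) (by omega)
    _ ≤ x := hxI.1

end Thresholds

section UniqueMinSlot

variable {ι X : Type*} (s : X → ℕ)

def uniqueMinSlot : Set (ι → X) := {ω | ∃ i, ∀ j, j ≠ i → s (ω i) < s (ω j)}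

def uniqueMinSlotAt [DecidableEq ι] (i : ι) (m : ℕ) : Set (ι → X) :=
  Set.univ.pi (Function.update (fun _ => s ⁻¹' Set.Ioi m) i (s ⁻¹' {m}))

variable {s}

theorem measurableSet_uniqueMinSlot [Countable ι] [MeasurableSpace X] (hs : Measurable s) :
    MeasurableSet (uniqueMinSlot s : Set (ι → X)) := by
  simp only [uniqueMinSlot, Set.ofPred_exists, Set.ofPred_forall]
  exact .iUnion fun i => .iInter fun j => .iInter fun _ =>
    measurableSet_lt (hs.comp (measurable_pi_apply i)) (hs.comp (measurable_pi_apply j))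

variable [DecidableEq ι]

theorem mem_uniqueMinSlotAt {i : ι} {m : ℕ} {ω : ι → X} :
    ω ∈ uniqueMinSlotAt s i m ↔ s (ω i) = m ∧ ∀ j, j ≠ i → m < s (ω j) := by
  simp only [uniqueMinSlotAt, Set.mem_univ_pi]
  constructor
  · intro h
    exact ⟨by simpa using h i, fun j hj => by simpa [hj] using h j⟩
  · rintro ⟨hi, hj⟩ j
    rcases eq_or_ne j i with rfl | hji
    · simpa using hi
    · simpa [hji] using hj j hji

theorem uniqueMinSlotAt_subset (i : ι) (m : ℕ) : uniqueMinSlotAt s i m ⊆ uniqueMinSlot s :=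
  fun ω hω => by
    obtain ⟨hi, hj⟩ := mem_uniqueMinSlotAt.1 hω
    exact ⟨i, fun j hji => hi ▸ hj j hji⟩

theorem eq_of_mem_uniqueMinSlotAt {i i' : ι} {m m' : ℕ} {ω : ι → X}
    (h : ω ∈ uniqueMinSlotAt s i m) (h' : ω ∈ uniqueMinSlotAt s i' m') :
    (i, m) = (i', m') := by
  obtain ⟨hi, hj⟩ := mem_uniqueMinSlotAt.1 h
  obtain ⟨hi', hj'⟩ := mem_uniqueMinSlotAt.1 h'
  rcases eq_or_ne i i' with rfl | hii
  · rw [← hi, ← hi']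
  · have := hj i' hii.symm
    have := hj' i hii
    omega

theorem indicator_uniqueMinSlot_iSup_eq_sum [Fintype ι] {s : ℝ → ℕ} {K : Finset ℕ}
    {ω : ι → ℝ} (hK : ∀ j, s (ω j) ∈ K) (hanti : ∀ i j, s (ω i) < s (ω j) → ω j ≤ ω i) :
    (uniqueMinSlot s).indicator (fun ω => ⨆ j, ω j) ω =
      ∑ p ∈ univ ×ˢ K, (uniqueMinSlotAt s p.1 p.2).indicator (fun ω => ω p.1) ω := by
  by_cases hω : ω ∈ uniqueMinSlot s
  · obtain ⟨i, hi⟩ := id hω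
    have : Nonempty ι := ⟨i⟩
    have hat : ω ∈ uniqueMinSlotAt s i (s (ω i)) := mem_uniqueMinSlotAt.2 ⟨rfl, hi⟩
    have hsup : ⨆ j, ω j = ω i := by
      refine le_antisymm (ciSup_le fun j => ?_) (le_ciSup (Set.finite_range ω).bddAbove i)
      rcases eq_or_ne j i with rfl | hji
      exacts [le_rfl, hanti i j (hi j hji)]
    rw [Set.indicator_of_mem hω, hsup, sum_eq_single_of_mem (i, s (ω i))
      (mem_product.2 ⟨mem_univ i, hK i⟩), Set.indicator_of_mem hat]
    exact fun p _ hp => Set.indicator_of_notMem (fun h => hp (eq_of_mem_uniqueMinSlotAt h hat)) _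
  · rw [Set.indicator_of_notMem hω]
    exact (sum_eq_zero fun p _ =>
      Set.indicator_of_notMem (fun h => hω (uniqueMinSlotAt_subset _ _ h)) _).symm

variable [MeasurableSpace X] {ν : Measure X}

theorem measurableSet_uniqueMinSlotAt [Countable ι] (hs : Measurable s) (i : ι) (m : ℕ) :
    MeasurableSet (uniqueMinSlotAt s i m) :=
  .univ_pi (measurableSet_update_apply (hs (measurableSet_singleton m)) (hs measurableSet_Ioi) i)

variable [Fintype ι]

theorem setIntegral_uniqueMinSlotAt [SigmaFinite ν] (hs : Measurable s) (i : ι) (m : ℕ)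
    (f : X → ℝ) :
    ∫ ω in uniqueMinSlotAt s i m, f (ω i) ∂Measure.pi (fun _ => ν) =
      (∫ x in s ⁻¹' {m}, f x ∂ν) * ν.real (s ⁻¹' Set.Ioi m) ^ (Fintype.card ι - 1) :=
  setIntegral_univ_pi_update_eval (hs (measurableSet_singleton m)) (hs measurableSet_Ioi) i f

theorem integrableOn_uniqueMinSlotAt [IsFiniteMeasure ν] (hs : Measurable s) (i : ι) (m : ℕ)
    {f : X → ℝ} (hf : Integrable f ν) :
    IntegrableOn (fun ω => f (ω i)) (uniqueMinSlotAt s i m) (Measure.pi fun _ => ν) :=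
  integrableOn_univ_pi_update_eval (hs (measurableSet_singleton m)) (hs measurableSet_Ioi) i
    hf.integrableOn

end UniqueMinSlot

theorem expected_scheduled_weight_identity_general (N M : ℕ) (hM : 1 ≤ M)
    (ν : Measure ℝ) [IsProbabilityMeasure ν]
    (a : ℕ → ℝ)
    (ha : ∀ m ∈ Finset.Icc 1 M, a m < a (m - 1))
    (hquant : ∀ m ∈ Finset.Icc 1 M, ν (Set.Ico (a m) (a (m - 1))) = 1 / M)
    (slot : ℝ → ℕ) (hmeas : Measurable slot)
    (hslot : ∀ m ∈ Finset.Icc 1 M, ∀ x : ℝ,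
      slot x = m ↔ x ∈ Set.Ico (a m) (a (m - 1)))
    (hint : Integrable (id : ℝ → ℝ) ν) :
    ∫ ω in {ω : Fin N → ℝ | ∃ i : Fin N, ∀ j : Fin N, j ≠ i → slot (ω i) < slot (ω j)},
        (⨆ i : Fin N, ω i) ∂(Measure.pi fun _ : Fin N => ν)
      = (N : ℝ) * ∑ m ∈ Finset.Icc 1 M,
          (((M : ℝ) - m) / M) ^ (N - 1) * ∫ x in Set.Ico (a m) (a (m - 1)), x ∂ν := by
  set μ := Measure.pi fun _ : Fin N => ν
  have hfiber : ∀ m ∈ Icc 1 M, slot ⁻¹' {m} = Set.Ico (a m) (a (m - 1)) :=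
    fun m hm => Set.ext (hslot m hm)
  have hunif : ∀ m ∈ Icc 1 M, ν (slot ⁻¹' {m}) = 1 / M := fun m hm => by
    rw [hfiber m hm, hquant m hm]
  have hgood : ∀ᵐ ω ∂μ, ∀ j, slot (ω j) ∈ Icc 1 M := ae_all_iff.2 fun j =>
    (Measure.tendsto_eval_ae_ae (i := j)).eventually (ae_mem_Icc_of_uniform hM hmeas hunif)
  have hpiece : ∀ p ∈ univ ×ˢ Icc 1 M, ∫ ω in uniqueMinSlotAt slot p.1 p.2, ω p.1 ∂μ =
      (((M : ℝ) - p.2) / M) ^ (N - 1) * ∫ x in Set.Ico (a p.2) (a (p.2 - 1)), x ∂ν := by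
    rintro ⟨i, m⟩ hp
    have hm : m ∈ Icc 1 M := (mem_product.1 hp).2
    rw [setIntegral_uniqueMinSlotAt hmeas i m (fun x => x), hfiber m hm,
      measureReal_preimage_Ioi_of_uniform hM hmeas hunif (mem_Icc.1 hm).2, Fintype.card_fin,
      mul_comm]
  calc ∫ ω in uniqueMinSlot slot, (⨆ i, ω i) ∂μ
    _ = ∫ ω, ∑ p ∈ univ ×ˢ Icc 1 M,
          (uniqueMinSlotAt slot p.1 p.2).indicator (fun ω => ω p.1) ω ∂μ := by
      rw [← integral_indicator (measurableSet_uniqueMinSlot hmeas)]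
      refine integral_congr_ae ?_
      filter_upwards [hgood] with ω hω
      exact indicator_uniqueMinSlot_iSup_eq_sum hω
        fun i j h => (lt_of_slot_lt ha hslot (hω i) (hω j) h).le
    _ = ∑ p ∈ univ ×ˢ Icc 1 M, ∫ ω in uniqueMinSlotAt slot p.1 p.2, ω p.1 ∂μ := by
      have hmeas_at (p : Fin N × ℕ) := measurableSet_uniqueMinSlotAt hmeas p.1 p.2
      rw [integral_finsetSum _ fun p _ => (integrableOn_uniqueMinSlotAt (f := fun x => x)
        hmeas p.1 p.2 hint).integrable_indicator (hmeas_at p)]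
      exact sum_congr rfl fun p _ => integral_indicator (hmeas_at p)
    _ = _ := by
      rw [sum_congr rfl hpiece]
      simp only [sum_product, sum_const, card_univ, Fintype.card_fin, nsmul_eq_mul]

/-- Lemma 2 of the paper: with `N` iid weights (modeled on the product space
`Fin N → ℝ` with product measure of a common law `ν`), a threshold mini-slot
assignment `slot` mapping each weight to one of `M` mini-slots through the quantile
thresholds `a M < ⋯ < a 0` (each slot interval having probability `1/M`),
and `S` the event that the minimum chosen slot is uniquely attained,
the expected scheduled weight satisfies
`E[W_* 1_S] = N ∑_{m=1}^M ((M-m)/M)^{N-1} E[W · 1_{a_m ≤ W < a_{m-1}}]`. -/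
theorem expected_scheduled_weight_identity (N M : ℕ) (hN : 1 ≤ N) (hM : 1 ≤ M)
    (ν : Measure ℝ) [IsProbabilityMeasure ν]
    (a : ℕ → ℝ)
    (ha : ∀ m ∈ Finset.Icc 1 M, a m < a (m - 1))
    (hquant : ∀ m ∈ Finset.Icc 1 M, ν (Set.Ico (a m) (a (m - 1))) = 1 / M)
    (slot : ℝ → ℕ) (hmeas : Measurable slot)
    (hslot : ∀ m ∈ Finset.Icc 1 M, ∀ x : ℝ,
      slot x = m ↔ x ∈ Set.Ico (a m) (a (m - 1)))
    (hint : Integrable (id : ℝ → ℝ) ν) :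
    ∫ ω in {ω : Fin N → ℝ | ∃ i : Fin N, ∀ j : Fin N, j ≠ i → slot (ω i) < slot (ω j)},
        (⨆ i : Fin N, ω i) ∂(Measure.pi fun _ : Fin N => ν)
      = (N : ℝ) * ∑ m ∈ Finset.Icc 1 M,
          (((M : ℝ) - m) / M) ^ (N - 1) * ∫ x in Set.Ico (a m) (a (m - 1)), x ∂ν :=
  expected_scheduled_weight_identity_general N M hM ν a ha hquant slot hmeas hslot hint
end

section
/- Let W_1,...,W_N (N ≥ 2) be iid nonnegative continuous random variables with W_* = max_i W_i, and suppose each pair is assigned uniformly at random (via quantile thresholds) to one of M ≥ N mini-slots, with S the event that the minimum slot is uniquely attained. Then E[W_* · 1_S] ≥ α · E[W_*] where α = (1 - (N/M)^N)/(1 + 1/(N-1))^{N-1} ∈ (0,1). -/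
/-!
Write `I_k = [a (k+1), a k)` (slot `k + 1`) for `k < M` and split `E[W_*]` into the pieces
`E[W_*; W_* ∈ I_k]`. Bounding the indicator of the piece by the sum over the coordinate that
attains the maximum, the `k`-th piece is at most `N · E[W; W ∈ I_k] · ((M-k)/M)^(N-1)`. On the
other hand the events "`W_i ∈ I_k` and every other `W_j` lies in a lower slot" are disjoint and lie
in `S`, and on each of them `W_* = W_i`, so together they contribute
`N · E[W; W ∈ I_k] · ((M-k-1)/M)^(N-1)` to `E[W_* 1_S]`. For `k ≤ M - N` the two bounds differ by at
most the factor `(1 + 1/(N-1))^(N-1)`. The last `N - 1` pieces are bounded instead by Chebyshev's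
association inequality `E[W_*; W_* < t] ≤ P(W_* < t) E[W_*]`, and `P(W_* < a k) = ((M-k)/M)^N`
summed over them is at most `(N/M)^N`.
-/

open MeasureTheory Set

theorem sum_range_pow_le (n k : ℕ) :
    ∑ j ∈ Finset.range n, (j : ℝ) ^ k ≤ (n : ℝ) ^ (k + 1) / (k + 1) := by
  have h := MonotoneOn.sum_le_integral (x₀ := 0) (a := n) (f := fun x : ℝ => x ^ k)
    fun x hx y _ hxy => pow_le_pow_left₀ hx.1 hxy k
  simpa [integral_pow] using h

theorem sum_range_pow_self_le (n : ℕ) :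
    ∑ j ∈ Finset.range n, (j : ℝ) ^ n ≤ (n : ℝ) ^ n := by
  refine (sum_range_pow_le n n).trans ?_
  rw [div_le_iff₀ (by positivity), pow_succ]
  gcongr
  linarith

theorem sum_Ico_sub_div_pow_le {N M : ℕ} (hNM : N ≤ M) :
    ∑ k ∈ Finset.Ico (M + 1 - N) M, (((M : ℝ) - k) / M) ^ N ≤ ((N : ℝ) / M) ^ N := by
  have hreflect := Finset.sum_Ico_reflect (fun j : ℕ => ((j : ℝ) / M) ^ N) (M + 1 - N)
    (Nat.le_succ M)
  rw [show M + 1 - M = 1 by omega, show M + 1 - (M + 1 - N) = N by omega] at hreflect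
  rw [Finset.sum_congr rfl fun k hk => by rw [← Nat.cast_sub (Finset.mem_Ico.mp hk).2.le],
    hreflect]
  calc ∑ j ∈ Finset.Ico 1 N, ((j : ℝ) / M) ^ N
      ≤ ∑ j ∈ Finset.range N, ((j : ℝ) / M) ^ N :=
        Finset.sum_le_sum_of_subset_of_nonneg (fun j hj => by simp_all)
          fun _ _ _ => by positivity
    _ = (∑ j ∈ Finset.range N, (j : ℝ) ^ N) / (M : ℝ) ^ N := by
        simp only [div_pow, Finset.sum_div]
    _ ≤ ((N : ℝ) / M) ^ N := by
        rw [div_pow]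
        gcongr
        exact sum_range_pow_self_le N

theorem div_pow_le_one_add_inv_pow_mul {n : ℕ} {x y : ℝ} (hx : n ≤ x) (hy : 0 ≤ y) :
    ((x + 1) / y) ^ n ≤ (1 + 1 / n) ^ n * (x / y) ^ n := by
  rcases Nat.eq_zero_or_pos n with rfl | hn
  · simp
  have hn' : (0 : ℝ) < n := by exact_mod_cast hn
  rw [div_pow, div_pow, mul_div_assoc', ← mul_pow]
  gcongr
  · linarith
  rw [add_mul, one_mul, one_div_mul_eq_div, add_le_add_iff_left, le_div_iff₀ hn', one_mul]
  exact hx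

theorem setIntegral_lt_le_measureReal_mul_integral {Ω : Type*} [MeasurableSpace Ω]
    {μ : Measure Ω} [IsProbabilityMeasure μ] {f : Ω → ℝ} (hf : Integrable f μ)
    (hfm : Measurable f) (t : ℝ) :
    ∫ x in {x | f x < t}, f x ∂μ ≤ μ.real {x | f x < t} * ∫ x, f x ∂μ := by
  set s := {x | f x < t}
  have hs : MeasurableSet s := measurableSet_lt hfm measurable_const
  have hbelow : ∫ x in s, f x ∂μ ≤ t * μ.real s := by
    calc ∫ x in s, f x ∂μ ≤ ∫ _ in s, t ∂μ :=
          setIntegral_mono_on hf.integrableOn (integrableOn_const (measure_ne_top μ s)) hs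
            fun _ hx => hx.le
      _ = t * μ.real s := by rw [setIntegral_const, smul_eq_mul, mul_comm]
  have habove : t * (1 - μ.real s) ≤ ∫ x in sᶜ, f x ∂μ := by
    calc t * (1 - μ.real s) = ∫ _ in sᶜ, t ∂μ := by
          rw [setIntegral_const, smul_eq_mul, mul_comm, probReal_compl_eq_one_sub hs]
      _ ≤ ∫ x in sᶜ, f x ∂μ :=
          setIntegral_mono_on (integrableOn_const (measure_ne_top μ _)) hf.integrableOn hs.compl
            fun x hx => not_lt.mp hx
  have hp : 0 ≤ μ.real s := measureReal_nonneg
  have hq : 0 ≤ 1 - μ.real s := sub_nonneg.mpr measureReal_le_one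
  rw [← integral_add_compl hs hf]
  nlinarith [mul_le_mul_of_nonneg_left hbelow hq, mul_le_mul_of_nonneg_left habove hp]

theorem integral_eq_sum_range_sub_setIntegral_lt {Ω : Type*} [MeasurableSpace Ω]
    {μ : Measure Ω} [IsProbabilityMeasure μ] (f : Ω → ℝ) (hfm : Measurable f) (t : ℕ → ℝ)
    (n : ℕ) (h0 : μ.real {x | f x < t 0} = 1) (hn : μ.real {x | f x < t n} = 0) :
    ∫ x, f x ∂μ = ∑ k ∈ Finset.range n,
      (∫ x in {x | f x < t k}, f x ∂μ - ∫ x in {x | f x < t (k + 1)}, f x ∂μ) := by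
  have hs : MeasurableSet {x | f x < t 0} := measurableSet_lt hfm measurable_const
  have hcompl : μ {x | f x < t 0}ᶜ = 0 := by
    rw [← measureReal_eq_zero_iff, probReal_compl_eq_one_sub hs, h0, sub_self]
  rw [Finset.sum_range_sub', setIntegral_measure_zero _ ((measureReal_eq_zero_iff).mp hn), sub_zero,
    Measure.restrict_eq_self_of_ae_mem (ae_iff.mpr hcompl)]

section PiSingle

variable {ι α : Type*}

def piSingle (i : ι) (I J : Set α) : Set (ι → α) := {ω | ω i ∈ I ∧ ∀ j, j ≠ i → ω j ∈ J}

theorem piSingle_eq_pi [DecidableEq ι] (i : ι) (I J : Set α) :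
    piSingle i I J = univ.pi (Function.update (fun _ => J) i I) := by
  ext ω
  simp only [piSingle, mem_ofPred_eq, mem_univ_pi]
  refine ⟨fun ⟨hi, hj⟩ j => ?_, fun h => ⟨by simpa using h i, fun j hj => by simpa [hj] using h j⟩⟩
  by_cases hji : j = i
  · subst hji; simpa using hi
  · simpa [hji] using hj j hji

theorem indicator_piSingle_eq_prod [Fintype ι] [DecidableEq ι] (i : ι) (I J : Set α)
    (g : α → ℝ) (ω : ι → α) :
    (piSingle i I J).indicator (fun ω => g (ω i)) ω
      = ∏ j, (if j = i then I.indicator g else J.indicator 1) (ω j) := by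
  by_cases hω : ω ∈ piSingle i I J
  · rw [indicator_of_mem hω, Fintype.prod_eq_mul_prod_compl i, if_pos rfl,
      indicator_of_mem hω.1, Finset.prod_eq_one, mul_one]
    intro j hj
    have hji : j ≠ i := by simpa using hj
    rw [if_neg hji, indicator_of_mem (hω.2 j hji), Pi.one_apply]
  · rw [indicator_of_notMem hω, eq_comm]
    simp only [piSingle, mem_ofPred_eq, not_and_or, not_forall] at hω
    rcases hω with hi | ⟨j, hji, hj⟩
    · exact Finset.prod_eq_zero (Finset.mem_univ i) (by rw [if_pos rfl, indicator_of_notMem hi])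
    · exact Finset.prod_eq_zero (Finset.mem_univ j) (by rw [if_neg hji, indicator_of_notMem hj])

variable [MeasurableSpace α]

theorem measurableSet_piSingle [Countable ι] {I J : Set α} (i : ι) (hI : MeasurableSet I)
    (hJ : MeasurableSet J) : MeasurableSet (piSingle i I J) := by
  classical
  rw [piSingle_eq_pi]
  refine MeasurableSet.univ_pi fun j => ?_
  by_cases hji : j = i
  · subst hji; simpa using hI
  · simpa [hji] using hJ

theorem setIntegral_piSingle [Fintype ι] (ν : Measure α) [SigmaFinite ν] {I J : Set α} (i : ι)
    (hI : MeasurableSet I) (hJ : MeasurableSet J) (g : α → ℝ) :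
    ∫ ω in piSingle i I J, g (ω i) ∂(Measure.pi fun _ => ν)
      = (∫ x in I, g x ∂ν) * ν.real J ^ (Fintype.card ι - 1) := by
  classical
  rw [← integral_indicator (measurableSet_piSingle i hI hJ)]
  simp_rw [indicator_piSingle_eq_prod]
  rw [integral_fintype_prod_eq_prod, Fintype.prod_eq_mul_prod_compl i, if_pos rfl,
    integral_indicator hI]
  congr 1
  rw [Finset.prod_congr rfl fun j (hj : j ∈ ({i}ᶜ : Finset ι)) => by
      rw [if_neg (Finset.mem_compl.mp hj ∘ Finset.mem_singleton.mpr), integral_indicator_one hJ],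
    Finset.prod_const, Finset.card_compl, Finset.card_singleton]

end PiSingle

section Order

variable {ι β : Type*} [Finite ι] [ConditionallyCompleteLinearOrder β]

theorem ciSup_lt_iff_of_finite [Nonempty ι] {ω : ι → β} {t : β} :
    ⨆ i, ω i < t ↔ ∀ i, ω i < t := by
  refine ⟨fun h i => (le_ciSup (Finite.bddAbove_range ω) i).trans_lt h, fun h => ?_⟩
  obtain ⟨i, hi⟩ := exists_eq_ciSup_of_finite (f := ω)
  exact hi ▸ h i

theorem ciSup_eq_of_mem_piSingle {I J : Set β} (hJI : ∀ x ∈ I, ∀ y ∈ J, y < x) {i : ι}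
    {ω : ι → β} (hω : ω ∈ piSingle i I J) : ⨆ j, ω j = ω i := by
  have : Nonempty ι := ⟨i⟩
  refine le_antisymm (ciSup_le fun j => ?_) (le_ciSup (Finite.bddAbove_range ω) i)
  by_cases hji : j = i
  · rw [hji]
  · exact (hJI _ hω.1 _ (hω.2 j hji)).le

theorem pairwiseDisjoint_piSingle {κ : Type*} {s : Set κ} {I J : κ → Set β}
    (hI : s.PairwiseDisjoint I) (hJI : ∀ k, ∀ x ∈ I k, ∀ y ∈ J k, y < x) :
    (s ×ˢ univ).PairwiseDisjoint fun p : κ × ι => piSingle p.2 (I p.1) (J p.1) := by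
  rintro ⟨k, i⟩ ⟨hk, -⟩ ⟨k', i'⟩ ⟨hk', -⟩ hne
  refine disjoint_left.mpr fun ω hω hω' => ?_
  by_cases hkk : k = k'
  · subst hkk
    have hii : i ≠ i' := fun h => hne (by rw [h])
    exact lt_irrefl _ (hJI k _ hω.1 _ (hω'.2 i hii))
  · have hmax : ⨆ j, ω j = ω i := ciSup_eq_of_mem_piSingle (hJI k) hω
    have hmax' : ⨆ j, ω j = ω i' := ciSup_eq_of_mem_piSingle (hJI k') hω'
    exact disjoint_left.mp (hI hk hk' hkk) (hmax ▸ hω.1) (hmax' ▸ hω'.1)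

end Order

noncomputable def truncMaxIntegral (ι : Type*) [Fintype ι] (ν : Measure ℝ) [SigmaFinite ν]
    (t : ℝ) : ℝ :=
  ∫ ω in {ω : ι → ℝ | ⨆ i, ω i < t}, ⨆ i, ω i ∂(Measure.pi fun _ => ν)

section Maximum

variable {ι : Type*} [Fintype ι] (ν : Measure ℝ) [IsFiniteMeasure ν]

theorem ae_forall_nonneg_pi (h0 : ∀ᵐ x ∂ν, 0 ≤ x) :
    ∀ᵐ ω ∂(Measure.pi fun _ : ι => ν), ∀ i, 0 ≤ ω i :=
  ae_all_iff.mpr fun _ => Measure.tendsto_eval_ae_ae.eventually h0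

theorem setIntegral_iSup_piSingle {I J : Set ℝ} (hI : MeasurableSet I)
    (hJ : MeasurableSet J) (hJI : ∀ x ∈ I, ∀ y ∈ J, y < x) (i : ι) :
    ∫ ω in piSingle i I J, ⨆ j, ω j ∂(Measure.pi fun _ => ν)
      = (∫ x in I, x ∂ν) * ν.real J ^ (Fintype.card ι - 1) := by
  rw [setIntegral_congr_fun (measurableSet_piSingle i hI hJ)
    fun ω hω => ciSup_eq_of_mem_piSingle hJI hω]
  exact setIntegral_piSingle ν i hI hJ id

theorem ae_iSup_nonneg (h0 : ∀ᵐ x ∂ν, 0 ≤ x) :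
    0 ≤ᵐ[Measure.pi fun _ : ι => ν] fun ω => ⨆ i, ω i :=
  (ae_forall_nonneg_pi ν h0).mono fun _ => Real.iSup_nonneg

theorem truncMaxIntegral_nonneg (h0 : ∀ᵐ x ∂ν, 0 ≤ x) (t : ℝ) : 0 ≤ truncMaxIntegral ι ν t :=
  integral_nonneg_of_ae (ae_restrict_of_ae (ae_iSup_nonneg ν h0))

variable [Nonempty ι]

theorem integrable_iSup_apply (hint : Integrable id ν) :
    Integrable (fun ω : ι → ℝ => ⨆ i, ω i) (Measure.pi fun _ => ν) := by
  refine Integrable.mono' (integrable_finsetSum Finset.univ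
    fun i _ => integrable_comp_eval (i := i) hint.abs) (by fun_prop) (ae_of_all _ fun ω => ?_)
  obtain ⟨i, hi⟩ := exists_eq_ciSup_of_finite (f := ω)
  rw [← hi, Real.norm_eq_abs]
  exact Finset.single_le_sum (f := fun j => |ω j|) (fun j _ => abs_nonneg _) (Finset.mem_univ i)

theorem measureReal_iSup_lt (t : ℝ) :
    (Measure.pi fun _ : ι => ν).real {ω | ⨆ i, ω i < t} = ν.real (Iio t) ^ Fintype.card ι := by
  have hpi : {ω : ι → ℝ | ⨆ i, ω i < t} = univ.pi fun _ => Iio t := by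
    ext ω
    simp [ciSup_lt_iff_of_finite]
  rw [hpi, measureReal_def, Measure.pi_pi, ENNReal.toReal_prod, Finset.prod_const,
    Finset.card_univ, measureReal_def]

theorem truncMaxIntegral_le_mul_integral [IsProbabilityMeasure ν] (hint : Integrable id ν)
    (t : ℝ) : truncMaxIntegral ι ν t
      ≤ ν.real (Iio t) ^ Fintype.card ι * ∫ ω, ⨆ i, ω i ∂(Measure.pi fun _ : ι => ν) := by
  rw [truncMaxIntegral, ← measureReal_iSup_lt]
  exact setIntegral_lt_le_measureReal_mul_integral (integrable_iSup_apply ν hint) (by fun_prop) t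

theorem indicator_iSup_lt_le {ω : ι → ℝ} (hω : ∀ i, 0 ≤ ω i) (c b : ℝ) :
    {ω : ι → ℝ | ⨆ i, ω i < b}.indicator (fun ω => ⨆ i, ω i) ω
      ≤ {ω : ι → ℝ | ⨆ i, ω i < c}.indicator (fun ω => ⨆ i, ω i) ω
        + ∑ i, (piSingle i (Ico c b) (Iio b)).indicator (fun ω => ω i) ω := by
  have hsum : 0 ≤ ∑ i, (piSingle i (Ico c b) (Iio b)).indicator (fun ω => ω i) ω :=
    Finset.sum_nonneg fun i _ => indicator_nonneg (fun ω _ => hω i) _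
  by_cases hb : ⨆ i, ω i < b
  · rw [indicator_of_mem (show ω ∈ {ω | ⨆ i, ω i < b} from hb)]
    by_cases hc : ⨆ i, ω i < c
    · rw [indicator_of_mem (show ω ∈ {ω | ⨆ i, ω i < c} from hc)]
      linarith
    · rw [indicator_of_notMem (show ω ∉ {ω | ⨆ i, ω i < c} from hc), zero_add]
      obtain ⟨i, hi⟩ := exists_eq_ciSup_of_finite (f := ω)
      have hmem : ω ∈ piSingle i (Ico c b) (Iio b) :=
        ⟨hi ▸ ⟨not_lt.mp hc, hb⟩, fun j _ => (ciSup_lt_iff_of_finite.mp hb) j⟩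
      calc ⨆ i, ω i = (piSingle i (Ico c b) (Iio b)).indicator (fun ω => ω i) ω := by
            rw [indicator_of_mem hmem, hi]
        _ ≤ _ := Finset.single_le_sum (f := fun i => (piSingle i (Ico c b) (Iio b)).indicator
              (fun ω => ω i) ω) (fun j _ => indicator_nonneg (fun ω _ => hω j) _)
              (Finset.mem_univ i)
  · rw [indicator_of_notMem (show ω ∉ {ω | ⨆ i, ω i < b} from hb)]
    exact add_nonneg (indicator_nonneg (fun _ _ => Real.iSup_nonneg hω) _) hsum

theorem truncMaxIntegral_le_add (h0 : ∀ᵐ x ∂ν, 0 ≤ x) (hint : Integrable id ν) (c b : ℝ) :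
    truncMaxIntegral ι ν b ≤ truncMaxIntegral ι ν c
        + Fintype.card ι * ((∫ x in Ico c b, x ∂ν) * ν.real (Iio b) ^ (Fintype.card ι - 1)) := by
  have hmeas : ∀ t : ℝ, MeasurableSet {ω : ι → ℝ | ⨆ i, ω i < t} :=
    fun t => measurableSet_lt (by fun_prop) measurable_const
  have hpiece : ∀ i : ι, Integrable ((piSingle i (Ico c b) (Iio b)).indicator fun ω => ω i)
      (Measure.pi fun _ : ι => ν) := fun i =>
    (integrable_comp_eval (i := i) (f := id) hint).indicator
      (measurableSet_piSingle i measurableSet_Ico measurableSet_Iio)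
  have hf := integrable_iSup_apply ν hint (ι := ι)
  rw [truncMaxIntegral, truncMaxIntegral, ← integral_indicator (hmeas b),
    ← integral_indicator (hmeas c)]
  calc _ ≤ ∫ ω, ({ω : ι → ℝ | ⨆ i, ω i < c}.indicator (fun ω => ⨆ i, ω i) ω
          + ∑ i, (piSingle i (Ico c b) (Iio b)).indicator (fun ω => ω i) ω)
            ∂(Measure.pi fun _ : ι => ν) :=
        integral_mono_ae (hf.indicator (hmeas b))
          ((hf.indicator (hmeas c)).add (integrable_finsetSum _ fun i _ => hpiece i))
          ((ae_forall_nonneg_pi ν h0).mono fun ω hω => indicator_iSup_lt_le hω c b)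
    _ = _ := by
        have hterm : ∀ i, ∫ ω in piSingle i (Ico c b) (Iio b), ω i ∂(Measure.pi fun _ : ι => ν)
            = (∫ x in Ico c b, x ∂ν) * ν.real (Iio b) ^ (Fintype.card ι - 1) :=
          fun i => setIntegral_piSingle ν i measurableSet_Ico measurableSet_Iio id
        rw [integral_add (hf.indicator (hmeas c)) (integrable_finsetSum _ fun i _ => hpiece i),
          integral_finsetSum _ fun i _ => hpiece i]
        simp_rw [integral_indicator (measurableSet_piSingle _ measurableSet_Ico measurableSet_Iio),
          hterm, Finset.sum_const, Finset.card_univ, nsmul_eq_mul]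

end Maximum

section Thresholds

variable {M : ℕ} {a : ℕ → ℝ}

theorem threshold_le_of_le (ha : ∀ k < M, a (k + 1) < a k) {k l : ℕ} (hkl : k ≤ l) (hl : l ≤ M) :
    a l ≤ a k := by
  induction l, hkl using Nat.le_induction with
  | base => exact le_rfl
  | succ l hkl ih => exact (ha l hl).le.trans (ih (by omega))

theorem pairwiseDisjoint_Ico_thresholds (ha : ∀ k < M, a (k + 1) < a k) :
    (Iio M).PairwiseDisjoint fun k => Ico (a (k + 1)) (a k) := by
  have key : ∀ k l, k < l → l < M → Disjoint (Ico (a (k + 1)) (a k)) (Ico (a (l + 1)) (a l)) :=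
    fun k l hkl hl => disjoint_left.mpr fun x hx hx' =>
      (hx'.2.trans_le (threshold_le_of_le ha hkl hl.le)).not_ge hx.1
  intro k hk l hl hne
  rcases Nat.lt_or_gt_of_ne hne with h | h
  · exact key k l h hl
  · exact (key l k h hk).symm

theorem exists_mem_Ico_succ_of_mem_Ico {n : ℕ} (hn : n ≤ M) {x : ℝ}
    (hx : x ∈ Ico (a M) (a n)) : ∃ l, n ≤ l ∧ l < M ∧ x ∈ Ico (a (l + 1)) (a l) := by
  induction M, hn using Nat.le_induction with
  | base => exact absurd hx.2 (not_lt.mpr hx.1)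
  | succ M hnM ih =>
    by_cases h : a M ≤ x
    · obtain ⟨l, hnl, hlM, hl⟩ := ih ⟨h, hx.2⟩
      exact ⟨l, hnl, hlM.trans (Nat.lt_succ_self M), hl⟩
    · exact ⟨M, hnM, Nat.lt_succ_self M, hx.1, not_le.mp h⟩

variable (ν : Measure ℝ)

theorem measureReal_Ico_thresholds [IsFiniteMeasure ν] (ha : ∀ k < M, a (k + 1) < a k)
    (hq : ∀ k < M, ν.real (Ico (a (k + 1)) (a k)) = 1 / M) {k l : ℕ} (hkl : k ≤ l) (hl : l ≤ M) :
    ν.real (Ico (a l) (a k)) = ((l : ℝ) - k) / M := by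
  induction l, hkl using Nat.le_induction with
  | base => simp
  | succ l hkl ih =>
    rw [← Ico_union_Ico_eq_Ico (ha l hl).le (threshold_le_of_le ha hkl (by omega)),
      measureReal_union (Ico_disjoint_Ico_same) measurableSet_Ico, hq l hl, ih (by omega)]
    push_cast
    ring

theorem measureReal_Iio_threshold [IsProbabilityMeasure ν] (ha : ∀ k < M, a (k + 1) < a k)
    (hq : ∀ k < M, ν.real (Ico (a (k + 1)) (a k)) = 1 / M) (hM : 0 < M) {k : ℕ} (hk : k ≤ M) :
    ν.real (Iio (a k)) = ((M : ℝ) - k) / M := by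
  have hunion : ∀ {l}, l ≤ M →
      ν.real (Iio (a l)) = ν.real (Iio (a M)) + ν.real (Ico (a M) (a l)) := fun hl => by
    rw [← measureReal_union (Iio_disjoint_Ici le_rfl |>.mono_right Ico_subset_Ici_self)
      measurableSet_Ico, Iio_union_Ico_eq_Iio (threshold_le_of_le ha hl le_rfl)]
  have hlast : ν.real (Iio (a M)) = 0 := by
    have htotal := hunion (Nat.zero_le M)
    rw [measureReal_Ico_thresholds ν ha hq (Nat.zero_le M) le_rfl, Nat.cast_zero, sub_zero,
      div_self (by positivity)] at htotal
    linarith [measureReal_nonneg (μ := ν) (s := Iio (a M)),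
      measureReal_le_one (μ := ν) (s := Iio (a 0))]
  rw [hunion hk, hlast, zero_add, measureReal_Ico_thresholds ν ha hq hk le_rfl]

end Thresholds

section Success

variable {ι : Type*} {M : ℕ} {a : ℕ → ℝ} {slot : ℝ → ℕ}

def successEvent (slot : ℝ → ℕ) : Set (ι → ℝ) :=
  {ω | ∃ i, ∀ j, j ≠ i → slot (ω i) < slot (ω j)}

theorem piSingle_subset_successEvent
    (hslot : ∀ k < M, ∀ x ∈ Ico (a (k + 1)) (a k), slot x = k + 1) {k : ℕ} (hk : k < M)
    (i : ι) : piSingle i (Ico (a (k + 1)) (a k)) (Ico (a M) (a (k + 1))) ⊆ successEvent slot := by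
  rintro ω ⟨hi, hj⟩
  refine ⟨i, fun j hji => ?_⟩
  obtain ⟨l, hkl, hlM, hl⟩ := exists_mem_Ico_succ_of_mem_Ico hk (hj j hji)
  rw [hslot k hk _ hi, hslot l hlM _ hl]
  omega

theorem sum_le_setIntegral_successEvent [Fintype ι] [Nonempty ι] (ν : Measure ℝ) [IsFiniteMeasure ν]
    (h0 : ∀ᵐ x ∂ν, 0 ≤ x) (hint : Integrable id ν) (ha : ∀ k < M, a (k + 1) < a k)
    (hslot : ∀ k < M, ∀ x ∈ Ico (a (k + 1)) (a k), slot x = k + 1) {K : ℕ} (hK : K ≤ M) :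
    ∑ k ∈ Finset.range K, Fintype.card ι * ((∫ x in Ico (a (k + 1)) (a k), x ∂ν)
        * ν.real (Ico (a M) (a (k + 1))) ^ (Fintype.card ι - 1))
      ≤ ∫ ω in successEvent slot, ⨆ i, ω i ∂(Measure.pi fun _ : ι => ν) := by
  set A : ℕ × ι → Set (ι → ℝ) :=
    fun p => piSingle p.2 (Ico (a (p.1 + 1)) (a p.1)) (Ico (a M) (a (p.1 + 1)))
  set P := Finset.range K ×ˢ (Finset.univ : Finset ι)
  have hJI : ∀ k, ∀ x ∈ Ico (a (k + 1)) (a k), ∀ y ∈ Ico (a M) (a (k + 1)), y < x :=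
    fun k x hx y hy => hy.2.trans_le hx.1
  have hdisj : (P : Set (ℕ × ι)).PairwiseDisjoint A := by
    rw [Finset.coe_product, Finset.coe_univ]
    refine pairwiseDisjoint_piSingle ((pairwiseDisjoint_Ico_thresholds ha).subset ?_) hJI
    intro k hk
    simp only [Finset.coe_range, mem_Iio] at hk ⊢
    omega
  have hsub : (⋃ p ∈ P, A p) ⊆ successEvent slot := by
    refine iUnion₂_subset fun p hp => piSingle_subset_successEvent hslot ?_ p.2
    have := (Finset.mem_product.mp hp).1
    simp only [Finset.mem_range] at this
    omega
  have hf := integrable_iSup_apply ν hint (ι := ι)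
  calc _ = ∑ p ∈ P, ∫ ω in A p, ⨆ i, ω i ∂(Measure.pi fun _ : ι => ν) := by
        rw [Finset.sum_product]
        simp [A, setIntegral_iSup_piSingle ν measurableSet_Ico measurableSet_Ico (hJI _)]
    _ = ∫ ω in ⋃ p ∈ P, A p, ⨆ i, ω i ∂(Measure.pi fun _ : ι => ν) :=
        (integral_biUnion_finset P (fun p _ => measurableSet_piSingle _ measurableSet_Ico
          measurableSet_Ico) hdisj fun p _ => hf.integrableOn).symm
    _ ≤ _ := setIntegral_mono_set hf.integrableOn (ae_restrict_of_ae (ae_iSup_nonneg ν h0))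
        hsub.eventuallyLE

end Success

section Pieces

variable {ι : Type*} [Fintype ι] [Nonempty ι] (ν : Measure ℝ) [IsProbabilityMeasure ν]
  {M : ℕ} {a : ℕ → ℝ}

theorem integral_iSup_eq_sum_truncMaxIntegral_sub (ha : ∀ k < M, a (k + 1) < a k)
    (hq : ∀ k < M, ν.real (Ico (a (k + 1)) (a k)) = 1 / M) (hM : 0 < M) :
    ∫ ω, ⨆ i, ω i ∂(Measure.pi fun _ : ι => ν)
      = ∑ k ∈ Finset.range M, (truncMaxIntegral ι ν (a k) - truncMaxIntegral ι ν (a (k + 1))) := by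
  refine integral_eq_sum_range_sub_setIntegral_lt _ (by fun_prop) a M ?_ ?_
  · rw [measureReal_iSup_lt, measureReal_Iio_threshold ν ha hq hM (Nat.zero_le M), Nat.cast_zero,
      sub_zero, div_self (by exact_mod_cast hM.ne'), one_pow]
  · rw [measureReal_iSup_lt, measureReal_Iio_threshold ν ha hq hM le_rfl, sub_self, zero_div,
      zero_pow Fintype.card_ne_zero]

theorem truncMaxIntegral_sub_le_of_add_le (h0 : ∀ᵐ x ∂ν, 0 ≤ x) (hint : Integrable id ν)
    (ha : ∀ k < M, a (k + 1) < a k) (hq : ∀ k < M, ν.real (Ico (a (k + 1)) (a k)) = 1 / M)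
    {k : ℕ} (hk : k + Fintype.card ι ≤ M) :
    truncMaxIntegral ι ν (a k) - truncMaxIntegral ι ν (a (k + 1))
      ≤ (1 + 1 / ((Fintype.card ι : ℝ) - 1)) ^ (Fintype.card ι - 1) * (Fintype.card ι *
        ((∫ x in Ico (a (k + 1)) (a k), x ∂ν)
          * ν.real (Ico (a M) (a (k + 1))) ^ (Fintype.card ι - 1))) := by
  set n := Fintype.card ι
  have hn : 0 < n := Fintype.card_pos
  have hunion := truncMaxIntegral_le_add ν h0 hint (ι := ι) (a (k + 1)) (a k)
  rw [measureReal_Iio_threshold ν ha hq (by omega) (by omega)] at hunion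
  rw [measureReal_Ico_thresholds ν ha hq (by omega) le_rfl]
  have hq0 : 0 ≤ ∫ x in Ico (a (k + 1)) (a k), x ∂ν := integral_nonneg_of_ae (ae_restrict_of_ae h0)
  have hratio : (((M : ℝ) - k) / M) ^ (n - 1)
      ≤ (1 + 1 / ((n : ℝ) - 1)) ^ (n - 1) * (((M : ℝ) - (k + 1 : ℕ)) / M) ^ (n - 1) := by
    have h := div_pow_le_one_add_inv_pow_mul (n := n - 1) (x := (M : ℝ) - (k + 1 : ℕ)) (y := M)
      (by rw [le_sub_iff_add_le]; exact_mod_cast (by omega : n - 1 + (k + 1) ≤ M)) (by positivity)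
    rw [Nat.cast_pred hn] at h
    convert h using 3
    push_cast
    ring
  calc truncMaxIntegral ι ν (a k) - truncMaxIntegral ι ν (a (k + 1))
      ≤ n * ((∫ x in Ico (a (k + 1)) (a k), x ∂ν) * (((M : ℝ) - k) / M) ^ (n - 1)) := by
        linarith
    _ ≤ n * ((∫ x in Ico (a (k + 1)) (a k), x ∂ν) * ((1 + 1 / ((n : ℝ) - 1)) ^ (n - 1)
          * (((M : ℝ) - (k + 1 : ℕ)) / M) ^ (n - 1))) := by
        gcongr
    _ = _ := by ring

theorem truncMaxIntegral_sub_le_mul_integral (h0 : ∀ᵐ x ∂ν, 0 ≤ x) (hint : Integrable id ν)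
    (ha : ∀ k < M, a (k + 1) < a k) (hq : ∀ k < M, ν.real (Ico (a (k + 1)) (a k)) = 1 / M)
    (hM : 0 < M) {k : ℕ} (hk : k ≤ M) :
    truncMaxIntegral ι ν (a k) - truncMaxIntegral ι ν (a (k + 1))
      ≤ (((M : ℝ) - k) / M) ^ Fintype.card ι * ∫ ω, ⨆ i, ω i ∂(Measure.pi fun _ : ι => ν) := by
  have h := truncMaxIntegral_le_mul_integral ν hint (ι := ι) (a k)
  rw [measureReal_Iio_threshold ν ha hq hM hk] at h
  linarith [truncMaxIntegral_nonneg ν h0 (ι := ι) (a (k + 1))]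

end Pieces

theorem cads_uniform_mapping_performance_general (N M : ℕ) (hN : 2 ≤ N) (hM : N ≤ M)
    (ν : Measure ℝ) [IsProbabilityMeasure ν]
    (hnonneg : ν {x : ℝ | x < 0} = 0)
    (a : ℕ → ℝ)
    (ha : ∀ m ∈ Finset.Icc 1 M, a m < a (m - 1))
    (hquant : ∀ m ∈ Finset.Icc 1 M, ν (Set.Ico (a m) (a (m - 1))) = 1 / M)
    (slot : ℝ → ℕ)
    (hslot : ∀ m ∈ Finset.Icc 1 M, ∀ x : ℝ,
      slot x = m ↔ x ∈ Set.Ico (a m) (a (m - 1)))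
    (hint : Integrable (id : ℝ → ℝ) ν) :
    (1 - ((N : ℝ) / M) ^ N) / (1 + 1 / ((N : ℝ) - 1)) ^ (N - 1)
        * ∫ ω, (⨆ i : Fin N, ω i) ∂(Measure.pi fun _ : Fin N => ν)
      ≤ ∫ ω in {ω : Fin N → ℝ | ∃ i : Fin N, ∀ j : Fin N, j ≠ i → slot (ω i) < slot (ω j)},
          (⨆ i : Fin N, ω i) ∂(Measure.pi fun _ : Fin N => ν) := by
  have hmem : ∀ k < M, k + 1 ∈ Finset.Icc 1 M := fun k hk => Finset.mem_Icc.mpr ⟨by omega, hk⟩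
  have ha' : ∀ k < M, a (k + 1) < a k := fun k hk => by simpa using ha _ (hmem k hk)
  have hq' : ∀ k < M, ν.real (Ico (a (k + 1)) (a k)) = 1 / M := fun k hk => by
    simpa [measureReal_def] using congrArg ENNReal.toReal (hquant _ (hmem k hk))
  have hslot' : ∀ k < M, ∀ x ∈ Ico (a (k + 1)) (a k), slot x = k + 1 := fun k hk x hx =>
    (hslot _ (hmem k hk) x).mpr (by simpa using hx)
  have h0 : ∀ᵐ x ∂ν, 0 ≤ x := by simpa [ae_iff] using hnonneg
  have : Nonempty (Fin N) := ⟨⟨0, by omega⟩⟩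
  have hKM : M + 1 - N ≤ M := by omega
  have hsplit := (integral_iSup_eq_sum_truncMaxIntegral_sub ν (ι := Fin N) ha' hq'
    (by omega)).trans (Finset.sum_range_add_sum_Ico _ hKM).symm
  have hgood := (Finset.sum_le_sum (s := Finset.range (M + 1 - N)) fun k hk =>
    truncMaxIntegral_sub_le_of_add_le ν (ι := Fin N) (k := k) h0 hint ha' hq'
      (by rw [Fintype.card_fin]; rw [Finset.mem_range] at hk; omega)).trans_eq
    (Finset.mul_sum _ _ _).symm
  have hbad := (Finset.sum_le_sum (s := Finset.Ico (M + 1 - N) M) fun k hk =>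
    truncMaxIntegral_sub_le_mul_integral ν (ι := Fin N) h0 hint ha' hq' (by omega)
      (Finset.mem_Ico.mp hk).2.le).trans_eq (Finset.sum_mul _ _ _).symm
  have hS := sum_le_setIntegral_successEvent ν (ι := Fin N) h0 hint ha' hslot' hKM
  have htail := mul_le_mul_of_nonneg_right (sum_Ico_sub_div_pow_le hM)
    (integral_nonneg_of_ae (ae_iSup_nonneg ν (ι := Fin N) h0))
  have hC : 0 < (1 + 1 / ((N : ℝ) - 1)) ^ (N - 1) := by
    have : (2 : ℝ) ≤ N := by exact_mod_cast hN
    have : 0 < (N : ℝ) - 1 := by linarith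
    positivity
  simp only [Fintype.card_fin] at hgood hbad hS
  change _ ≤ ∫ ω in successEvent slot, ⨆ i, ω i ∂(Measure.pi fun _ : Fin N => ν)
  rw [div_mul_eq_mul_div, div_le_iff₀ hC]
  linarith [mul_le_mul_of_nonneg_left hS hC.le]

/-- Theorem 5 of the paper (performance of CADS with uniform mapping): for `N ≥ 2`
iid nonnegative continuous weights (product space model, common law `ν`), `M ≥ N`
mini-slots assigned via quantile thresholds (each slot interval of probability `1/M`),
and `S` the event that the minimum chosen slot is uniquely attained, the expected
scheduled weight satisfies `E[W_* 1_S] ≥ α E[W_*]` with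
`α = (1 - (N/M)^N)/(1 + 1/(N-1))^{N-1}`. -/
theorem cads_uniform_mapping_performance (N M : ℕ) (hN : 2 ≤ N) (hM : N ≤ M)
    (ν : Measure ℝ) [IsProbabilityMeasure ν]
    (hnonneg : ν {x : ℝ | x < 0} = 0)
    (hcont : ∀ x : ℝ, ν {x} = 0)
    (a : ℕ → ℝ)
    (ha : ∀ m ∈ Finset.Icc 1 M, a m < a (m - 1))
    (hquant : ∀ m ∈ Finset.Icc 1 M, ν (Set.Ico (a m) (a (m - 1))) = 1 / M)
    (slot : ℝ → ℕ) (hmeas : Measurable slot)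
    (hslot : ∀ m ∈ Finset.Icc 1 M, ∀ x : ℝ,
      slot x = m ↔ x ∈ Set.Ico (a m) (a (m - 1)))
    (hint : Integrable (id : ℝ → ℝ) ν) :
    (1 - ((N : ℝ) / M) ^ N) / (1 + 1 / ((N : ℝ) - 1)) ^ (N - 1)
        * ∫ ω, (⨆ i : Fin N, ω i) ∂(Measure.pi fun _ : Fin N => ν)
      ≤ ∫ ω in {ω : Fin N → ℝ | ∃ i : Fin N, ∀ j : Fin N, j ≠ i → slot (ω i) < slot (ω j)},
          (⨆ i : Fin N, ω i) ∂(Measure.pi fun _ : Fin N => ν) :=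
  cads_uniform_mapping_performance_general N M hN hM ν hnonneg a ha hquant slot hslot hint
end

section
/- The success probability p(N,M) = Σ_{m=1}^{M} (N/M)·((M-m)/M)^{N-1} is nonincreasing in N for fixed M (N ≥ 1), and nondecreasing in M for fixed N; moreover p(N,M) → 1 as M → ∞ with N fixed. -/
/-!
Substituting `k = M - m` turns `p(N, M)` into `N M⁻ᴺ ∑_{k<M} k^(N-1)`, which is `N` times the left
Riemann sum of `x ↦ x^(N-1)` on `[0, 1]` with mesh `1/M`. Comparing the power sum `∑_{k<M} k^n`
with `∫₀^M xⁿ = M^(n+1)/(n+1)` gives `1 - N/M ≤ p(N, M) ≤ 1`, and, by induction on `M`, the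
inequality `(n+2) ∑ k^(n+1) ≤ (n+1) M ∑ kⁿ`, which is monotonicity in `N`. Monotonicity in `M`
holds for the left Riemann sums of every convex nondecreasing function on `[0, ∞)`: each grid
point `k/M` is a convex combination of the neighbouring points `k/(M+1)` and `(k+1)/(M+1)` of
the next grid.
-/

open Filter

/-- Success probability of contention resolution with `N` pairs and `M` mini-slots
(Theorem 4 of the paper). -/
noncomputable def successProb (N M : ℕ) : ℝ :=
  ∑ m ∈ Finset.Icc 1 M, ((N : ℝ) / M) * (((M : ℝ) - m) / M) ^ (N - 1)

open Finset

theorem sum_Icc_one_natCast_sub_eq_sum_range {β : Type*} [AddCommMonoid β] (f : ℝ → β) (M : ℕ) :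
    ∑ m ∈ Icc 1 M, f ((M : ℝ) - m) = ∑ k ∈ range M, f k := by
  refine sum_nbij' (fun m => M - m) (fun k => M - k) ?_ ?_ ?_ ?_ ?_ <;> intro m hm <;>
    simp only [mem_Icc, mem_range] at hm ⊢ <;>
    first | omega | rw [Nat.cast_sub hm.2]

theorem mul_sum_range_pow_le (n M : ℕ) :
    (n + 1) * ∑ k ∈ range M, (k : ℝ) ^ n ≤ (M : ℝ) ^ (n + 1) := by
  have h : ∑ k ∈ range M, ((0 : ℝ) + k) ^ n ≤ ∫ x in (0 : ℝ)..0 + M, x ^ n :=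
    (pow_left_monotoneOn.mono Set.Icc_subset_Ici_self).sum_le_integral
  simp only [zero_add] at h
  rw [integral_pow, zero_pow n.succ_ne_zero, sub_zero, le_div_iff₀ (by positivity)] at h
  linarith

theorem pow_le_mul_sum_range_succ_pow (n M : ℕ) :
    (M : ℝ) ^ (n + 1) ≤ (n + 1) * ∑ k ∈ range (M + 1), (k : ℝ) ^ n := by
  have h : ∫ x in (0 : ℝ)..0 + M, x ^ n ≤ ∑ k ∈ range M, ((0 : ℝ) + (k + 1 : ℕ)) ^ n :=
    (pow_left_monotoneOn.mono Set.Icc_subset_Ici_self).integral_le_sum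
  simp only [zero_add] at h
  rw [integral_pow, zero_pow n.succ_ne_zero, sub_zero, div_le_iff₀ (by positivity)] at h
  have h0 : (0 : ℝ) ≤ ((0 : ℕ) : ℝ) ^ n := by positivity
  rw [sum_range_succ']
  nlinarith

theorem mul_sum_range_pow_succ_le (n M : ℕ) :
    (n + 2) * ∑ k ∈ range M, (k : ℝ) ^ (n + 1) ≤ (n + 1) * M * ∑ k ∈ range M, (k : ℝ) ^ n := by
  induction M with
  | zero => simp
  | succ M ih =>
    have key := pow_le_mul_sum_range_succ_pow n M
    simp only [sum_range_succ, Nat.cast_succ] at key ⊢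
    nlinarith [pow_succ (M : ℝ) n]

theorem sum_range_sub_mul_add_mul_succ (g : ℕ → ℝ) (M : ℕ) :
    ∑ k ∈ range M, ((M - k : ℝ) * g k + k * g (k + 1)) =
      (M - 1) * ∑ k ∈ range (M + 1), g k + g 0 := by
  have hfirst : ∑ k ∈ range M, (M - k : ℝ) * g k = ∑ k ∈ range (M + 1), (M - k : ℝ) * g k := by
    simp [sum_range_succ]
  have hsecond : ∑ k ∈ range M, (k : ℝ) * g (k + 1) =
      ∑ k ∈ range (M + 1), (k - 1 : ℝ) * g k + g 0 := by
    simp [sum_range_succ']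
  rw [sum_add_distrib, hfirst, hsecond, ← add_assoc, ← sum_add_distrib, mul_sum]
  congr 1
  exact sum_congr rfl fun k _ => by ring

theorem ConvexOn.mul_apply_div_le {f : ℝ → ℝ} (hf : ConvexOn ℝ (Set.Ici 0) f) {k M : ℝ}
    (hk : 0 ≤ k) (hkM : k ≤ M) (hM : 0 < M) :
    M * f (k / M) ≤ (M - k) * f (k / (M + 1)) + k * f ((k + 1) / (M + 1)) := by
  have h := hf.2 (show k / (M + 1) ∈ Set.Ici 0 by simp; positivity)
    (show (k + 1) / (M + 1) ∈ Set.Ici 0 by simp; positivity)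
    (show 0 ≤ (M - k) / M from div_nonneg (by linarith) hM.le) (show 0 ≤ k / M by positivity)
    (by field_simp; ring)
  simp only [smul_eq_mul] at h
  rw [show (M - k) / M * (k / (M + 1)) + k / M * ((k + 1) / (M + 1)) = k / M by
    field_simp; ring] at h
  calc M * f (k / M) ≤ M * ((M - k) / M * f (k / (M + 1)) + k / M * f ((k + 1) / (M + 1))) :=
        mul_le_mul_of_nonneg_left h hM.le
    _ = (M - k) * f (k / (M + 1)) + k * f ((k + 1) / (M + 1)) := by field_simp

theorem ConvexOn.sum_range_div_le_sum_range_succ_div {f : ℝ → ℝ}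
    (hf : ConvexOn ℝ (Set.Ici 0) f) (hmono : MonotoneOn f (Set.Ici 0)) {M : ℕ} (hM : 0 < M) :
    (∑ k ∈ range M, f (k / M)) / M ≤ (∑ k ∈ range (M + 1), f (k / (M + 1))) / (M + 1) := by
  have hM' : (0 : ℝ) < M := by exact_mod_cast hM
  set T := ∑ k ∈ range (M + 1), f (k / (M + 1))
  have hstep : M * ∑ k ∈ range M, f (k / M) ≤ (M - 1) * T + f 0 := by
    calc M * ∑ k ∈ range M, f (k / M)
        ≤ ∑ k ∈ range M, ((M - k : ℝ) * f (k / (M + 1)) + k * f ((k + 1) / (M + 1))) := by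
          rw [mul_sum]
          refine sum_le_sum fun k hk => hf.mul_apply_div_le k.cast_nonneg ?_ hM'
          exact_mod_cast (mem_range.1 hk).le
      _ = (M - 1) * T + f 0 := by
          simpa using sum_range_sub_mul_add_mul_succ (fun j => f (j / (M + 1))) M
  have hT : (M + 1) * f 0 ≤ T := by
    have h := card_nsmul_le_sum (range (M + 1)) (fun k : ℕ => f (k / (M + 1))) (f 0)
      fun k _ => hmono Set.self_mem_Ici (by simp; positivity) (by positivity)
    simpa using h
  rw [div_le_div_iff₀ hM' (by positivity)]
  nlinarith [mul_le_mul_of_nonneg_left hstep (by positivity : (0 : ℝ) ≤ M + 1)]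

theorem successProb_eq_mul_sum_div (N M : ℕ) :
    successProb N M = N * ((∑ k ∈ range M, ((k : ℝ) / M) ^ (N - 1)) / M) := by
  rw [successProb, ← mul_sum, sum_Icc_one_natCast_sub_eq_sum_range (fun x => (x / M) ^ (N - 1))]
  ring

theorem successProb_succ_eq (n M : ℕ) :
    successProb (n + 1) M = (n + 1) * (∑ k ∈ range M, (k : ℝ) ^ n) / M ^ (n + 1) := by
  simp only [successProb_eq_mul_sum_div, Nat.add_sub_cancel, div_pow, ← sum_div]
  push_cast
  rw [div_div, ← pow_succ, mul_div_assoc]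

theorem successProb_le_one (N M : ℕ) : successProb N M ≤ 1 := by
  rcases N with _ | n
  · simp [successProb]
  rw [successProb_succ_eq]
  exact div_le_one_of_le₀ (mul_sum_range_pow_le n M) (by positivity)

theorem one_sub_div_le_successProb {N M : ℕ} (hN : 1 ≤ N) (hM : 1 ≤ M) :
    1 - N / M ≤ successProb N M := by
  obtain ⟨n, rfl⟩ := Nat.exists_eq_add_of_le' hN
  have hM' : (0 : ℝ) < M := by exact_mod_cast hM
  have key := pow_le_mul_sum_range_succ_pow n M
  rw [sum_range_succ] at key
  rw [successProb_succ_eq, le_div_iff₀ (by positivity)]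
  calc (1 - ((n + 1 : ℕ) : ℝ) / M) * M ^ (n + 1) = M ^ (n + 1) - (n + 1) * M ^ n := by
        field_simp; push_cast; ring
    _ ≤ (n + 1) * ∑ k ∈ range M, (k : ℝ) ^ n := by linarith

theorem tendsto_successProb {N : ℕ} (hN : 1 ≤ N) : Tendsto (successProb N) atTop (nhds 1) := by
  refine tendsto_of_tendsto_of_tendsto_of_le_of_le' ?_ tendsto_const_nhds
    ((eventually_ge_atTop 1).mono fun M hM => one_sub_div_le_successProb hN hM)
    (Eventually.of_forall (successProb_le_one N))
  simpa using tendsto_const_nhds.sub (tendsto_const_div_atTop_nhds_zero_nat (N : ℝ))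

theorem successProb_succ_le {N M : ℕ} (hN : 1 ≤ N) :
    successProb (N + 1) M ≤ successProb N M := by
  obtain ⟨n, rfl⟩ := Nat.exists_eq_add_of_le' hN
  rcases M.eq_zero_or_pos with rfl | hM
  · simp [successProb]
  rw [successProb_succ_eq, successProb_succ_eq, div_le_div_iff₀ (by positivity) (by positivity)]
  have key := mul_sum_range_pow_succ_le n M
  push_cast
  calc (n + 1 + 1) * (∑ k ∈ range M, (k : ℝ) ^ (n + 1)) * M ^ (n + 1)
      ≤ (n + 1) * M * (∑ k ∈ range M, (k : ℝ) ^ n) * M ^ (n + 1) := by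
        rw [add_assoc, one_add_one_eq_two]; gcongr
    _ = _ := by ring

theorem successProb_le_succ {N M : ℕ} (hM : 1 ≤ M) :
    successProb N M ≤ successProb N (M + 1) := by
  rw [successProb_eq_mul_sum_div, successProb_eq_mul_sum_div]
  push_cast
  exact mul_le_mul_of_nonneg_left
    ((convexOn_pow _).sum_range_div_le_sum_range_succ_div pow_left_monotoneOn hM) N.cast_nonneg

/-- `p(N,M)` is nonincreasing in `N` for fixed `M`, nondecreasing in `M` for fixed
`N`, and tends to `1` as `M → ∞` with `N` fixed. -/
theorem successProb_monotonicity_and_limit :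
    (∀ N M : ℕ, 1 ≤ N → 1 ≤ M → successProb (N + 1) M ≤ successProb N M) ∧
    (∀ N M : ℕ, 1 ≤ N → 1 ≤ M → successProb N M ≤ successProb N (M + 1)) ∧
    (∀ N : ℕ, 1 ≤ N →
      Tendsto (fun M : ℕ => successProb N M) atTop (nhds 1)) :=
  ⟨fun _ _ hN _ => successProb_succ_le hN, fun _ _ _ hM => successProb_le_succ hM,
    fun _ hN => tendsto_successProb hN⟩
end
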